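/- Let G be a connected graph and P a disk pattern in ℂ realizing (G, Θ) with 0 ≤ Θ ≤ π/2. If P is locally finite in ℂ (every compact set meets only finitely many disks), then G is VEL-parabolic: VEL(V_0, ∞) = ∞ for any finite nonempty vertex subset V_0. -/

import Mathlib

open ENNReal Real Metric

variable {V : Type*}

/-- The area of a vertex metric `η`. -/
noncomputable def vArea (η : V → NNReal) : ℝ≥0∞ := ∑' v, (η v : ℝ≥0∞) ^ 2

/-- A vertex metric is admissible for a family `Γ` of vertex curves if every
curve has `η`-length at least `1`. -/
def Admissible (Γ : Set (Set V)) (η : V → NNReal) : Prop :=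
  ∀ γ ∈ Γ, 1 ≤ ∑' v : γ, (η v : ℝ≥0∞)

/-- The vertex modulus of a family of vertex curves. -/
noncomputable def MOD (Γ : Set (Set V)) : ℝ≥0∞ :=
  ⨅ (η : V → NNReal) (_ : Admissible Γ η), vArea η

/-- The vertex extremal length of a family of vertex curves. -/
noncomputable def VEL (Γ : Set (Set V)) : ℝ≥0∞ := (MOD Γ)⁻¹

/-- The family of (vertex sets of) paths in `G` joining `A` and `B`. -/
def pathsBetween (G : SimpleGraph V) (A B : Set V) : Set (Set V) :=
  {S | ∃ (u v : V) (w : G.Walk u v), u ∈ A ∧ v ∈ B ∧ S = {x | x ∈ w.support}}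

/-- The vertex extremal length between two vertex sets. -/
noncomputable def vel (G : SimpleGraph V) (A B : Set V) : ℝ≥0∞ :=
  VEL (pathsBetween G A B)

/-- A disk pattern `v ↦ closedBall (c v) (ρ v)` realizes the data `(G, Θ)`:
adjacent disks intersect with dihedral angle `Θ` (law of cosines) and
non-adjacent disks are disjoint. -/
def RealizesData (G : SimpleGraph V) (Θ : Sym2 V → ℝ) (c : V → ℂ) (ρ : V → ℝ) : Prop :=
  (∀ v, 0 < ρ v) ∧
  (∀ e ∈ G.edgeSet, Θ e ∈ Set.Icc 0 (π / 2)) ∧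
  (∀ u v, G.Adj u v →
    dist (c u) (c v) ^ 2 = ρ u ^ 2 + ρ v ^ 2 + 2 * ρ u * ρ v * Real.cos (Θ s(u, v))) ∧
  (∀ u v, u ≠ v → ¬G.Adj u v →
    Disjoint (closedBall (c u) (ρ u)) (closedBall (c v) (ρ v)))

/-- The family of (vertex sets of) infinite paths starting in `V₀` and passing
through infinitely many vertices. -/
def infPathsFrom (G : SimpleGraph V) (V₀ : Set V) : Set (Set V) :=
  {S | ∃ p : ℕ → V, p 0 ∈ V₀ ∧ (∀ n, G.Adj (p n) (p (n + 1))) ∧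
    (Set.range p).Infinite ∧ S = Set.range p}


/-! ### Auxiliary lemmas -/

section Aux

open MeasureTheory

lemma packing {ι : Type*} (T : Finset ι) (x : ι → ℂ) (t : ι → ℝ) (R : ℝ) (hR : 0 ≤ R)
    (ht : ∀ i ∈ T, 0 ≤ t i)
    (hsub : ∀ i ∈ T, ball (x i) (t i) ⊆ ball (0:ℂ) R)
    (hdisj : ∀ i ∈ T, ∀ j ∈ T, i ≠ j → t i + t j ≤ dist (x i) (x j)) :
    ∑ i ∈ T, t i ^ 2 ≤ R ^ 2 := by
  have hpd : (T : Set ι).PairwiseDisjoint fun i => ball (x i) (t i) := fun i hi j hj hij =>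
    ball_disjoint_ball (hdisj i hi j hj hij)
  have hvol := measure_biUnion_finset (μ := volume) hpd (fun i _ => measurableSet_ball)
  have hle : ∑ i ∈ T, volume (ball (x i) (t i)) ≤ volume (ball (0:ℂ) R) := by
    rw [← hvol]; exact measure_mono (Set.iUnion₂_subset hsub)
  simp only [Complex.volume_ball] at hle
  rw [← Finset.sum_mul] at hle
  have h2 : ∑ i ∈ T, ENNReal.ofReal (t i) ^ 2 ≤ ENNReal.ofReal R ^ 2 :=
    (ENNReal.mul_le_mul_iff_left (by simp [NNReal.pi_ne_zero]) ENNReal.coe_ne_top).mp hle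
  have h3 : ENNReal.ofReal (∑ i ∈ T, t i ^ 2) ≤ ENNReal.ofReal (R ^ 2) := by
    rw [ENNReal.ofReal_sum_of_nonneg (fun i _ => sq_nonneg (t i))]
    calc ∑ i ∈ T, ENNReal.ofReal (t i ^ 2) = ∑ i ∈ T, ENNReal.ofReal (t i) ^ 2 := by
          refine Finset.sum_congr rfl fun i hi => ?_
          rw [← ENNReal.ofReal_pow (ht i hi)]
      _ ≤ ENNReal.ofReal R ^ 2 := h2
      _ = ENNReal.ofReal (R ^ 2) := by rw [← ENNReal.ofReal_pow hR]
  exact (ENNReal.ofReal_le_ofReal_iff (sq_nonneg R)).mp h3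

lemma far_sep {a b : ℂ} {ra rb r : ℝ} (hr : 0 < r) (ha : 16*r ≤ ‖a‖) (hb : 16*r ≤ ‖b‖)
    (hra : ‖a‖ - 2*r ≤ ra) (hrb : ‖b‖ - 2*r ≤ rb)
    (hd : ra^2 + rb^2 ≤ dist a b ^ 2) :
    3/5 + 3/5 ≤ dist (‖a‖⁻¹ • a) (‖b‖⁻¹ • b) := by
  set A := ‖a‖ with hA'
  set B := ‖b‖ with hB'
  have hA : 0 < A := by linarith
  have hB : 0 < B := by linarith
  set P : ℝ := @inner ℝ ℂ _ a b with hPdef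
  have hab : dist a b ^ 2 = A^2 - 2*P + B^2 := by
    rw [dist_eq_norm, norm_sub_sq_real a b]
  have h1 : (A - 2*r)^2 ≤ ra^2 := by nlinarith
  have h2 : (B - 2*r)^2 ≤ rb^2 := by nlinarith
  have hPb : P ≤ 2*r*(A+B) - 4*r^2 := by nlinarith
  have hnorm : dist (A⁻¹ • a) (B⁻¹ • b) ^ 2 = 2 - 2 * (A⁻¹ * (B⁻¹ * P)) := by
    rw [dist_eq_norm, norm_sub_sq_real, real_inner_smul_left,
      real_inner_smul_right, norm_smul, norm_smul]
    simp only [norm_inv, norm_norm, ← hA', ← hB', ← hPdef]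
    rw [Real.norm_eq_abs, Real.norm_eq_abs, abs_of_pos hA, abs_of_pos hB,
      inv_mul_cancel₀ hA.ne', inv_mul_cancel₀ hB.ne']
    ring
  have h16a : 16*r*B ≤ A*B := by nlinarith
  have h16b : 16*r*A ≤ A*B := by nlinarith
  have hABpos : 0 < A*B := mul_pos hA hB
  have hfrac : A⁻¹ * (B⁻¹ * P) = P/(A*B) := by field_simp
  have key : (6/5:ℝ)^2 ≤ 2 - 2 * (A⁻¹ * (B⁻¹ * P)) := by
    rw [hfrac]
    rw [show (2:ℝ) - 2*(P/(A*B)) = 2 - (2*P)/(A*B) by ring]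
    rw [le_sub_iff_add_le, ← le_sub_iff_add_le', div_le_iff₀ hABpos]
    nlinarith
  nlinarith [dist_nonneg (x := A⁻¹ • a) (y := B⁻¹ • b), hnorm, key]

variable {G : SimpleGraph V} {Θ : Sym2 V → ℝ} {c : V → ℂ} {ρ : V → ℝ}

lemma dist_sq_ge (hP : RealizesData G Θ c ρ) {u v : V} (huv : u ≠ v) :
    ρ u ^ 2 + ρ v ^ 2 ≤ dist (c u) (c v) ^ 2 := by
  obtain ⟨hρ, hΘ, hloc, hdisj⟩ := hP
  by_cases h : G.Adj u v
  · have hc := hloc u v h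
    have hmem := hΘ _ ((SimpleGraph.mem_edgeSet G).mpr h)
    have hcos : 0 ≤ Real.cos (Θ s(u, v)) :=
      Real.cos_nonneg_of_mem_Icc ⟨by linarith [hmem.1, Real.pi_pos], hmem.2⟩
    nlinarith [(hρ u).le, (hρ v).le,
      mul_nonneg (mul_nonneg (mul_nonneg (by norm_num : (0:ℝ) ≤ 2) (hρ u).le) (hρ v).le) hcos]
  · have hd := hdisj u v huv h
    have hlt : ρ u + ρ v < dist (c u) (c v) := by
      by_contra hle
      push_neg at hle
      have hs0 : 0 < ρ u + ρ v := by linarith [hρ u, hρ v]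
      set z := c u + (ρ u / (ρ u + ρ v)) • (c v - c u) with hz
      have h1 : z ∈ closedBall (c u) (ρ u) := by
        rw [mem_closedBall, dist_eq_norm]
        have hzz : z - c u = (ρ u / (ρ u + ρ v)) • (c v - c u) := by rw [hz]; abel
        rw [hzz, norm_smul, Real.norm_eq_abs, abs_of_nonneg (div_nonneg (hρ u).le hs0.le),
          ← dist_eq_norm, dist_comm]
        calc ρ u / (ρ u + ρ v) * dist (c u) (c v) ≤ ρ u / (ρ u + ρ v) * (ρ u + ρ v) :=
              mul_le_mul_of_nonneg_left hle (div_nonneg (hρ u).le hs0.le)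
          _ = ρ u := div_mul_cancel₀ _ hs0.ne'
      have h2 : z ∈ closedBall (c v) (ρ v) := by
        rw [mem_closedBall, dist_eq_norm]
        have hvs : (ρ v / (ρ u + ρ v)) = 1 - ρ u / (ρ u + ρ v) := by
          field_simp
          ring
        have hzz : z - c v = (ρ v / (ρ u + ρ v)) • (c u - c v) := by rw [hz, hvs]; module
        rw [hzz, norm_smul, Real.norm_eq_abs, abs_of_nonneg (div_nonneg (hρ v).le hs0.le),
          ← dist_eq_norm]
        calc ρ v / (ρ u + ρ v) * dist (c u) (c v) ≤ ρ v / (ρ u + ρ v) * (ρ u + ρ v) :=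
              mul_le_mul_of_nonneg_left hle (div_nonneg (hρ v).le hs0.le)
          _ = ρ v := div_mul_cancel₀ _ hs0.ne'
      exact Set.disjoint_left.mp hd h1 h2
    nlinarith [hρ u, hρ v, dist_nonneg (x := c u) (y := c v)]

lemma adj_dist_le (hP : RealizesData G Θ c ρ) {u v : V} (h : G.Adj u v) :
    dist (c u) (c v) ≤ ρ u + ρ v := by
  have hc := hP.2.2.1 u v h
  have hcos := Real.cos_le_one (Θ s(u, v))
  have hu := hP.1 u
  have hv := hP.1 v
  nlinarith [dist_nonneg (x := c u) (y := c v),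
    mul_le_mul_of_nonneg_left hcos (by positivity : (0:ℝ) ≤ 2 * ρ u * ρ v)]

lemma mem_inter_ball {v : V} (hρv : 0 < ρ v) {r : ℝ} (hr : 0 < r) (h1 : ‖c v‖ - ρ v ≤ 2*r) :
    (closedBall (c v) (ρ v) ∩ closedBall (0:ℂ) (2*r)).Nonempty := by
  by_cases hc : ‖c v‖ ≤ 2*r
  · exact ⟨c v, mem_closedBall_self hρv.le, by simpa [mem_closedBall_zero_iff] using hc⟩
  · push_neg at hc
    have hcpos : 0 < ‖c v‖ := by linarith
    by_cases hρc : ‖c v‖ ≤ ρ v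
    · refine ⟨0, ?_, mem_closedBall_self (by linarith)⟩
      rw [mem_closedBall, dist_zero_left]
      exact hρc
    · push_neg at hρc
      refine ⟨(1 - ρ v / ‖c v‖) • c v, ?_, ?_⟩
      · rw [mem_closedBall, dist_eq_norm]
        have hzz : (1 - ρ v / ‖c v‖) • c v - c v = (-(ρ v / ‖c v‖)) • c v := by module
        rw [hzz, norm_smul, Real.norm_eq_abs, abs_neg, abs_of_nonneg (by positivity),
          div_mul_cancel₀ _ hcpos.ne']
      · rw [mem_closedBall_zero_iff, norm_smul, Real.norm_eq_abs,
          abs_of_nonneg (by rw [sub_nonneg]; exact div_le_one_of_le₀ hρc.le hcpos.le)]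
        have : (1 - ρ v/‖c v‖)*‖c v‖ = ‖c v‖ - ρ v := by
          rw [sub_mul, one_mul, div_mul_cancel₀ _ hcpos.ne']
        linarith

open Classical in
/-- The annulus metric at scale `r`. -/
noncomputable def etaAnn (c : V → ℂ) (ρ : V → ℝ) (r : ℝ) (v : V) : NNReal :=
  if ‖c v‖ - ρ v ≤ 2 * r ∧ r ≤ ‖c v‖ + ρ v then Real.toNNReal (min (2 * ρ v) r / r) else 0

lemma escape (hρ : ∀ v, 0 < ρ v)
    (hlf : ∀ K : Set ℂ, IsCompact K →
      {v | (closedBall (c v) (ρ v) ∩ K).Nonempty}.Finite)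
    (p : ℕ → V) (hinf : (Set.range p).Infinite) (R : ℝ) :
    ∃ n, R < ‖c (p n)‖ := by
  have hF := hlf _ (isCompact_closedBall (0:ℂ) R)
  obtain ⟨v, hv, hvn⟩ := hinf.exists_notMem_finite hF
  obtain ⟨n, rfl⟩ := hv
  refine ⟨n, ?_⟩
  by_contra hle
  push_neg at hle
  exact hvn ⟨c (p n), mem_closedBall_self (hρ _).le, by simpa [mem_closedBall_zero_iff] using hle⟩

lemma walkIVT (hP : RealizesData G Θ c ρ) (p : ℕ → V)
    (hadj : ∀ n, G.Adj (p n) (p (n + 1))) (s : ℝ)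
    (h0 : ‖c (p 0)‖ ≤ s) (hN : ∃ N, s < ‖c (p N)‖) :
    ∃ n, ‖c (p n)‖ - ρ (p n) ≤ s ∧ s ≤ ‖c (p n)‖ + ρ (p n) := by
  classical
  have hex : ∃ n, s ≤ ‖c (p n)‖ := hN.imp fun N h => h.le
  have hfind := Nat.find_spec hex
  rcases Nat.eq_zero_or_pos (Nat.find hex) with h0' | hpos
  · rw [h0'] at hfind
    have hs0 : s = ‖c (p 0)‖ := le_antisymm hfind h0
    exact ⟨0, by linarith [hP.1 (p 0)], by linarith [hP.1 (p 0)]⟩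
  · obtain ⟨k, hk⟩ : ∃ k, Nat.find hex = k + 1 := ⟨Nat.find hex - 1, by omega⟩
    have hklt : ‖c (p k)‖ < s := by
      have := Nat.find_min hex (by omega : k < Nat.find hex)
      push_neg at this; exact this
    have hsm : s ≤ ‖c (p (k + 1))‖ := by rw [hk] at hfind; exact hfind
    have hdiff : ‖c (p (k + 1))‖ - ‖c (p k)‖ ≤ ρ (p k) + ρ (p (k + 1)) := by
      have h1 : dist (c (p k)) (c (p (k + 1))) ≤ ρ (p k) + ρ (p (k + 1)) :=
        adj_dist_le hP (hadj k)
      have h2 := abs_norm_sub_norm_le (c (p (k + 1))) (c (p k))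
      rw [← dist_eq_norm, dist_comm] at h2
      calc ‖c (p (k + 1))‖ - ‖c (p k)‖ ≤ |‖c (p (k + 1))‖ - ‖c (p k)‖| := le_abs_self _
        _ ≤ dist (c (p k)) (c (p (k + 1))) := h2
        _ ≤ _ := h1
    by_cases hcase : ‖c (p (k + 1))‖ - ρ (p (k + 1)) ≤ s
    · exact ⟨k + 1, hcase, by linarith [hP.1 (p (k + 1))]⟩
    · push_neg at hcase
      exact ⟨k, by linarith [hP.1 (p k)], by linarith⟩

lemma crossing (hP : RealizesData G Θ c ρ)
    (hlf : ∀ K : Set ℂ, IsCompact K →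
      {v | (closedBall (c v) (ρ v) ∩ K).Nonempty}.Finite)
    {p : ℕ → V} (hadj : ∀ n, G.Adj (p n) (p (n + 1)))
    (hinf : (Set.range p).Infinite) {r : ℝ} (hr : 0 < r) (h0 : ‖c (p 0)‖ ≤ r) :
    1 ≤ ∑' v : (Set.range p), (etaAnn c ρ r v : ℝ≥0∞) := by
  classical
  set I : V → Set ℝ := fun v =>
    Set.Icc (max (‖c v‖ - ρ v) r) (min (‖c v‖ + ρ v) (2 * r)) with hI
  have hcover : Set.Icc r (2 * r) ⊆ ⋃ v ∈ Set.range p, I v := by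
    intro s hs
    obtain ⟨hs1, hs2⟩ := hs
    obtain ⟨N, hNs⟩ := escape hP.1 hlf p hinf (2 * r)
    obtain ⟨n, hn1, hn2⟩ := walkIVT hP p hadj s (le_trans h0 hs1) ⟨N, lt_of_le_of_lt hs2 hNs⟩
    exact Set.mem_biUnion ⟨n, rfl⟩ ⟨max_le hn1 hs1, le_min hn2 hs2⟩
  have hμ : ENNReal.ofReal r ≤ ∑' v : (Set.range p), volume (I v) := by
    calc ENNReal.ofReal r = volume (Set.Icc r (2 * r)) := by
          rw [Real.volume_Icc]; congr 1; ring
      _ ≤ volume (⋃ v ∈ Set.range p, I v) := measure_mono hcover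
      _ ≤ _ := measure_biUnion_le _ (Set.countable_range p) I
  have hpt : ∀ v : V, volume (I v) ≤ (etaAnn c ρ r v : ℝ≥0∞) * ENNReal.ofReal r := by
    intro v
    rw [hI]
    simp only
    rw [Real.volume_Icc]
    by_cases hv : ‖c v‖ - ρ v ≤ 2 * r ∧ r ≤ ‖c v‖ + ρ v
    · have hmin : min (‖c v‖ + ρ v) (2 * r) - max (‖c v‖ - ρ v) r ≤ min (2 * ρ v) r := by
        refine le_min ?_ ?_
        · have h1 := min_le_left (‖c v‖ + ρ v) (2 * r)
          have h2 := le_max_left (‖c v‖ - ρ v) r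
          linarith
        · have h1 := min_le_right (‖c v‖ + ρ v) (2 * r)
          have h2 := le_max_right (‖c v‖ - ρ v) r
          linarith
      have hnn : 0 ≤ min (2 * ρ v) r / r := by
        apply div_nonneg _ hr.le
        exact le_min (by linarith [hP.1 v]) hr.le
      calc ENNReal.ofReal _ ≤ ENNReal.ofReal (min (2 * ρ v) r) := ENNReal.ofReal_le_ofReal hmin
        _ = ENNReal.ofReal (min (2 * ρ v) r / r * r) := by rw [div_mul_cancel₀ _ hr.ne']
        _ = ENNReal.ofReal (min (2 * ρ v) r / r) * ENNReal.ofReal r := ENNReal.ofReal_mul hnn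
        _ = _ := by rw [etaAnn, if_pos hv]; rfl
    · have hz : etaAnn c ρ r v = 0 := by rw [etaAnn, if_neg hv]
      rw [hz]
      simp only [ENNReal.coe_zero, zero_mul, nonpos_iff_eq_zero, ENNReal.ofReal_eq_zero]
      rcases not_and_or.mp hv with hv1 | hv2
      · push_neg at hv1
        have h1 := min_le_right (‖c v‖ + ρ v) (2 * r)
        have h2 := le_max_left (‖c v‖ - ρ v) r
        linarith
      · push_neg at hv2
        have h1 := min_le_left (‖c v‖ + ρ v) (2 * r)
        have h2 := le_max_right (‖c v‖ - ρ v) r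
        linarith
  have hfin : ENNReal.ofReal r ≤
      (∑' v : (Set.range p), (etaAnn c ρ r v : ℝ≥0∞)) * ENNReal.ofReal r := by
    refine le_trans hμ ?_
    rw [← ENNReal.tsum_mul_right]
    exact ENNReal.tsum_le_tsum fun v => hpt v
  have hr0 : ENNReal.ofReal r ≠ 0 := by simp [hr]
  have hfin' : 1 * ENNReal.ofReal r ≤
      (∑' v : (Set.range p), (etaAnn c ρ r v : ℝ≥0∞)) * ENNReal.ofReal r := by
    rwa [one_mul]
  exact (ENNReal.mul_le_mul_iff_left hr0 ENNReal.ofReal_ne_top).mp hfin'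

lemma annulus_area (hP : RealizesData G Θ c ρ) {r : ℝ} (hr : 0 < r) (T : Finset V)
    (hT : ∀ v ∈ T, ‖c v‖ - ρ v ≤ 2 * r ∧ r ≤ ‖c v‖ + ρ v) :
    ∑ v ∈ T, (min (2 * ρ v) r / r) ^ 2 ≤ 4633 := by
  classical
  have hρ := hP.1
  set f : V → ℝ := fun v => (min (2 * ρ v) r / r) ^ 2 with hf
  have hsplit := Finset.sum_filter_add_sum_filter_not T (fun v => ‖c v‖ ≤ 16 * r) f
  set T₁ := T.filter (fun v => ‖c v‖ ≤ 16 * r) with hT1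
  set T₂ := T.filter (fun v => ¬(‖c v‖ ≤ 16 * r)) with hT2
  have hnear : ∑ v ∈ T₁, f v ≤ 4624 := by
    have hpack := packing T₁ c (fun v => min (ρ v) (r / 2) / 2) (17 * r) (by linarith)
      (fun v _ => by
        have := hρ v
        have h1 : 0 < min (ρ v) (r / 2) := lt_min this (by linarith)
        linarith)
      (fun v hv => by
        intro z hz
        rw [mem_ball] at hz ⊢
        have hvT : ‖c v‖ ≤ 16 * r := (Finset.mem_filter.mp hv).2
        have h1 : min (ρ v) (r / 2) / 2 ≤ r / 4 := by
          have := min_le_right (ρ v) (r / 2); linarith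
        have h2 : dist z 0 ≤ dist z (c v) + dist (c v) 0 := dist_triangle _ _ _
        have h3 : dist (c v) 0 = ‖c v‖ := by rw [dist_zero_right]
        linarith)
      (fun u hu v hv huv => by
        have hdist := dist_sq_ge hP huv
        have h1 : 0 < min (ρ u) (r / 2) := lt_min (hρ u) (by linarith)
        have h2 : 0 < min (ρ v) (r / 2) := lt_min (hρ v) (by linarith)
        have h3 : min (ρ u) (r / 2) ≤ ρ u := min_le_left _ _
        have h4 : min (ρ v) (r / 2) ≤ ρ v := min_le_left _ _
        have h5 : min (ρ u) (r / 2) ^ 2 + min (ρ v) (r / 2) ^ 2 ≤ dist (c u) (c v) ^ 2 := by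
          nlinarith [hρ u, hρ v]
        nlinarith [dist_nonneg (x := c u) (y := c v),
          sq_nonneg (min (ρ u) (r / 2) - min (ρ v) (r / 2))])
    have heq : ∀ v, f v = 16 * (min (ρ v) (r / 2) / 2) ^ 2 / r ^ 2 := by
      intro v
      have hmin : min (2 * ρ v) r = 2 * min (ρ v) (r / 2) := by
        rcases le_total (ρ v) (r / 2) with h | h
        · rw [min_eq_left (by linarith), min_eq_left h]
        · rw [min_eq_right (by linarith), min_eq_right h]; ring
      rw [hf]
      simp only
      rw [hmin]
      field_simp
      ring
    calc ∑ v ∈ T₁, f v = ∑ v ∈ T₁, 16 * (min (ρ v) (r / 2) / 2) ^ 2 / r ^ 2 :=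
          Finset.sum_congr rfl fun v _ => heq v
      _ = (∑ v ∈ T₁, (min (ρ v) (r / 2) / 2) ^ 2) * 16 / r ^ 2 := by
          rw [Finset.sum_mul, Finset.sum_div]
          exact Finset.sum_congr rfl fun v _ => by ring
      _ ≤ (17 * r) ^ 2 * 16 / r ^ 2 := by
          gcongr
      _ = 4624 := by field_simp; ring
  have hfar : ∑ v ∈ T₂, f v ≤ 9 := by
    have hpack := packing T₂ (fun v => ‖c v‖⁻¹ • c v) (fun _ => 3 / 5) (17 / 10) (by norm_num)
      (fun v _ => by norm_num)
      (fun v hv => by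
        intro z hz
        have hz' : dist z (‖c v‖⁻¹ • c v) < 3 / 5 := hz
        rw [mem_ball]
        have hvT : ¬‖c v‖ ≤ 16 * r := (Finset.mem_filter.mp hv).2
        push_neg at hvT
        have hc0 : 0 < ‖c v‖ := by linarith
        have hn : ‖(‖c v‖⁻¹ • c v)‖ = 1 := by
          rw [norm_smul, Real.norm_eq_abs, abs_of_pos (by positivity), inv_mul_cancel₀ hc0.ne']
        have h2 : dist z 0 ≤ dist z (‖c v‖⁻¹ • c v) + dist (‖c v‖⁻¹ • c v) 0 := dist_triangle _ _ _
        rw [dist_zero_right] at h2 ⊢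
        rw [dist_zero_right, hn] at h2
        linarith)
      (fun u hu v hv huv => by
        have hdist := dist_sq_ge hP huv
        have huT : 16 * r ≤ ‖c u‖ := le_of_not_ge (Finset.mem_filter.mp hu).2
        have hvT : 16 * r ≤ ‖c v‖ := le_of_not_ge (Finset.mem_filter.mp hv).2
        have hu2 : ‖c u‖ - ρ u ≤ 2 * r := (hT u (Finset.mem_filter.mp hu).1).1
        have hv2 : ‖c v‖ - ρ v ≤ 2 * r := (hT v (Finset.mem_filter.mp hv).1).1
        exact far_sep hr huT hvT (by linarith) (by linarith) hdist)
    have hcard : (T₂.card : ℝ) * ((3 / 5) ^ 2) ≤ (17 / 10) ^ 2 := by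
      calc (T₂.card : ℝ) * ((3 / 5) ^ 2) = ∑ _v ∈ T₂, ((3:ℝ) / 5) ^ 2 := by
            rw [Finset.sum_const, nsmul_eq_mul]
        _ ≤ _ := hpack
    have hle1 : ∀ v ∈ T₂, f v ≤ 1 := by
      intro v _
      rw [hf]
      simp only
      have h1 : min (2 * ρ v) r ≤ r := min_le_right _ _
      have h2 : 0 ≤ min (2 * ρ v) r / r := by
        apply div_nonneg _ hr.le
        exact le_min (by linarith [hρ v]) hr.le
      have h3 : min (2 * ρ v) r / r ≤ 1 := by
        rw [div_le_one hr]; exact h1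
      nlinarith
    calc ∑ v ∈ T₂, f v ≤ ∑ _v ∈ T₂, (1:ℝ) := Finset.sum_le_sum hle1
      _ = T₂.card := by rw [Finset.sum_const, nsmul_eq_mul, mul_one]
      _ ≤ 9 := by nlinarith [hcard]
  linarith [hsplit.symm.le]

/-- Next radius: beyond every disk that meets `closedBall 0 (2r)`. -/
noncomputable def nextR (c : V → ℂ) (ρ : V → ℝ) (r : ℝ) : ℝ :=
  max (2 * r)
    (sSup ((fun v => ‖c v‖ + ρ v) ''
      {v | (closedBall (c v) (ρ v) ∩ closedBall (0:ℂ) (2 * r)).Nonempty}) + 1)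

noncomputable def Rseq (c : V → ℂ) (ρ : V → ℝ) (b0 : ℝ) : ℕ → ℝ
  | 0 => max 1 b0
  | (k + 1) => nextR c ρ (Rseq c ρ b0 k)

lemma Rseq_one_le (c : V → ℂ) (ρ : V → ℝ) (b0 : ℝ) : ∀ k, 1 ≤ Rseq c ρ b0 k
  | 0 => le_max_left _ _
  | (k + 1) => by
      have := Rseq_one_le c ρ b0 k
      calc (1:ℝ) ≤ 2 * Rseq c ρ b0 k := by linarith
        _ ≤ _ := le_max_left _ _

lemma Rseq_mono (c : V → ℂ) (ρ : V → ℝ) (b0 : ℝ) : Monotone (Rseq c ρ b0) := by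
  apply monotone_nat_of_le_succ
  intro k
  have := Rseq_one_le c ρ b0 k
  calc Rseq c ρ b0 k ≤ 2 * Rseq c ρ b0 k := by linarith
    _ ≤ _ := le_max_left _ _

lemma Rseq_key {c : V → ℂ} {ρ : V → ℝ}
    (hlf : ∀ K : Set ℂ, IsCompact K →
      {v | (closedBall (c v) (ρ v) ∩ K).Nonempty}.Finite)
    (b0 : ℝ) (k : ℕ) (v : V)
    (hv : (closedBall (c v) (ρ v) ∩ closedBall (0:ℂ) (2 * Rseq c ρ b0 k)).Nonempty) :
    ‖c v‖ + ρ v < Rseq c ρ b0 (k + 1) := by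
  have hfin := hlf (closedBall (0:ℂ) (2 * Rseq c ρ b0 k)) (isCompact_closedBall _ _)
  have hbdd : BddAbove ((fun v => ‖c v‖ + ρ v) ''
      {v | (closedBall (c v) (ρ v) ∩ closedBall (0:ℂ) (2 * Rseq c ρ b0 k)).Nonempty}) :=
    (hfin.image _).bddAbove
  have hle := le_csSup hbdd ⟨v, hv, rfl⟩
  calc ‖c v‖ + ρ v ≤ _ := hle
    _ < _ + 1 := by linarith
    _ ≤ Rseq c ρ b0 (k + 1) := le_max_right _ _

lemma sq_sum_eq {n : ℕ} (a : ℕ → NNReal)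
    (h : ∀ k ∈ Finset.range n, ∀ j ∈ Finset.range n, k ≠ j → a k = 0 ∨ a j = 0) :
    (∑ k ∈ Finset.range n, a k) ^ 2 = ∑ k ∈ Finset.range n, a k ^ 2 := by
  rw [sq, Finset.sum_mul_sum]
  refine Finset.sum_congr rfl fun k hk => ?_
  rw [Finset.sum_eq_single k]
  · rw [sq]
  · intro j hj hjk
    rcases h k hk j hj (Ne.symm hjk) with h0 | h0 <;> rw [h0] <;> ring
  · intro hkk
    exact absurd hk hkk

end Aux

/-- If a disk pattern realizing `(G, Θ)`, `0 ≤ Θ ≤ π/2`, on a connected graph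
`G` is locally finite in the plane, then `G` is VEL-parabolic. -/
theorem stmt11 (G : SimpleGraph V) (hconn : G.Connected) (Θ : Sym2 V → ℝ)
    (c : V → ℂ) (ρ : V → ℝ) (hP : RealizesData G Θ c ρ)
    (hlf : ∀ K : Set ℂ, IsCompact K →
      {v | (closedBall (c v) (ρ v) ∩ K).Nonempty}.Finite) :
    ∀ V₀ : Set V, V₀.Finite → V₀.Nonempty → VEL (infPathsFrom G V₀) = ⊤ := by

  intro V₀ hV₀fin hV₀ne
  classical
  obtain ⟨b0, hb0⟩ := (hV₀fin.image (fun v => ‖c v‖)).bddAbove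
  set R : ℕ → ℝ := Rseq c ρ b0 with hRdef
  have hR1 : ∀ k, 1 ≤ R k := Rseq_one_le c ρ b0
  have hRpos : ∀ k, 0 < R k := fun k => lt_of_lt_of_le one_pos (hR1 k)
  have hRmono : Monotone R := Rseq_mono c ρ b0
  have hRV₀ : ∀ k, ∀ v ∈ V₀, ‖c v‖ ≤ R k := by
    intro k v hv
    calc ‖c v‖ ≤ b0 := hb0 (Set.mem_image_of_mem _ hv)
      _ ≤ max 1 b0 := le_max_right _ _
      _ ≤ R k := hRmono (Nat.zero_le k)
  set S : ℕ → V → Prop := fun k v => ‖c v‖ - ρ v ≤ 2 * R k ∧ R k ≤ ‖c v‖ + ρ v with hSdef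
  have hSF : ∀ k v, S k v →
      (closedBall (c v) (ρ v) ∩ closedBall (0:ℂ) (2 * R k)).Nonempty :=
    fun k v h => mem_inter_ball (hP.1 v) (hRpos k) h.1
  have hSdisj : ∀ k j v, k < j → S k v → ¬ S j v := by
    intro k j v hkj h1 h2
    have h3 := Rseq_key hlf b0 k v (hSF k v h1)
    have h4 : R (k + 1) ≤ R j := hRmono hkj
    have h5 := h2.2
    linarith
  have hetaS : ∀ k v, etaAnn c ρ (R k) v ≠ 0 → S k v := by
    intro k v h
    by_contra hns
    exact h (by rw [etaAnn, if_neg hns])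
  have hconst0 : (ENNReal.ofReal 4633) ≠ 0 := (ENNReal.ofReal_pos.mpr (by norm_num)).ne'
  have hMODle : ∀ n : ℕ, 0 < n →
      MOD (infPathsFrom G V₀) ≤ ENNReal.ofReal 4633 * (n : ℝ≥0∞)⁻¹ := by
    intro n hn
    have hnn0 : (n : NNReal) ≠ 0 := Nat.cast_ne_zero.mpr hn.ne'
    have hcast0 : (n : ℝ≥0∞) ≠ 0 := Nat.cast_ne_zero.mpr hn.ne'
    set η : V → NNReal :=
      fun v => (n : NNReal)⁻¹ * ∑ k ∈ Finset.range n, etaAnn c ρ (R k) v with hη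
    have hcoe : ∀ v : V, (η v : ℝ≥0∞) =
        (n : ℝ≥0∞)⁻¹ * ∑ k ∈ Finset.range n, (etaAnn c ρ (R k) v : ℝ≥0∞) := by
      intro v
      rw [hη]
      simp only
      rw [ENNReal.coe_mul, ENNReal.coe_inv hnn0, ENNReal.coe_finset_sum, ENNReal.coe_natCast]
    have hadm : Admissible (infPathsFrom G V₀) η := by
      rintro γ ⟨p, hp0, hpadj, hpinf, rfl⟩
      have hann : ∀ k, (1:ℝ≥0∞) ≤ ∑' v : (Set.range p), (etaAnn c ρ (R k) v : ℝ≥0∞) :=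
        fun k => crossing hP hlf hpadj hpinf (hRpos k) (hRV₀ k _ hp0)
      calc (1:ℝ≥0∞) = (n : ℝ≥0∞)⁻¹ * (n : ℝ≥0∞) :=
            (ENNReal.inv_mul_cancel hcast0 (ENNReal.natCast_ne_top n)).symm
        _ ≤ (n : ℝ≥0∞)⁻¹ *
            ∑ k ∈ Finset.range n, ∑' v : (Set.range p), (etaAnn c ρ (R k) v : ℝ≥0∞) := by
            apply mul_le_mul_right
            calc (n : ℝ≥0∞) = ∑ _k ∈ Finset.range n, 1 := by simp
              _ ≤ _ := Finset.sum_le_sum fun k _ => hann k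
        _ = (n : ℝ≥0∞)⁻¹ *
            ∑' v : (Set.range p), ∑ k ∈ Finset.range n, (etaAnn c ρ (R k) v : ℝ≥0∞) := by
            rw [Summable.tsum_finsetSum (fun k _ => ENNReal.summable)]
        _ = ∑' v : (Set.range p), (η v : ℝ≥0∞) := by
            rw [← ENNReal.tsum_mul_left]
            exact tsum_congr fun v => (hcoe v).symm
    have hUfin : {v | ∃ k ∈ Finset.range n, S k v}.Finite := by
      have hsub : {v | ∃ k ∈ Finset.range n, S k v} ⊆
          ⋃ k ∈ Finset.range n,
            {v | (closedBall (c v) (ρ v) ∩ closedBall (0:ℂ) (2 * R k)).Nonempty} := by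
        rintro v ⟨k, hk, hSkv⟩
        exact Set.mem_biUnion hk (hSF k v hSkv)
      exact ((Finset.range n).finite_toSet.biUnion
        (fun k _ => hlf _ (isCompact_closedBall _ _))).subset hsub
    set U := hUfin.toFinset with hU
    have hηzero : ∀ v ∉ U, (η v : ℝ≥0∞) ^ 2 = 0 := by
      intro v hv
      have hz : η v = 0 := by
        rw [hη]
        simp only
        convert mul_zero ((n : NNReal)⁻¹) using 2
        apply Finset.sum_eq_zero
        intro k hk
        by_contra h
        exact hv (hUfin.mem_toFinset.mpr ⟨k, hk, hetaS k v h⟩)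
      rw [hz]; simp
    have hannArea : ∀ k, ∑ v ∈ U, (etaAnn c ρ (R k) v : ℝ≥0∞) ^ 2 ≤ ENNReal.ofReal 4633 := by
      intro k
      have hsplit : ∑ v ∈ U, (etaAnn c ρ (R k) v : ℝ≥0∞) ^ 2
          = ∑ v ∈ U.filter (fun v => S k v), (etaAnn c ρ (R k) v : ℝ≥0∞) ^ 2 := by
        symm
        apply Finset.sum_subset (Finset.filter_subset _ _)
        intro v hvU hvf
        have hns : ¬ S k v := fun hS => hvf (Finset.mem_filter.mpr ⟨hvU, hS⟩)
        rw [etaAnn, if_neg hns]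
        simp
      rw [hsplit]
      have hterm : ∀ v ∈ U.filter (fun v => S k v), (etaAnn c ρ (R k) v : ℝ≥0∞) ^ 2
          = ENNReal.ofReal ((min (2 * ρ v) (R k) / R k) ^ 2) := by
        intro v hv
        have hSv : S k v := (Finset.mem_filter.mp hv).2
        rw [etaAnn, if_pos hSv,
          ENNReal.ofReal_pow (div_nonneg (le_min (by linarith [hP.1 v]) (hRpos k).le)
            (hRpos k).le)]
        rfl
      rw [Finset.sum_congr rfl hterm,
        ← ENNReal.ofReal_sum_of_nonneg (fun v _ => sq_nonneg _)]
      apply ENNReal.ofReal_le_ofReal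
      apply annulus_area hP (hRpos k)
      intro v hv
      exact (Finset.mem_filter.mp hv).2
    have harea : vArea η ≤ ENNReal.ofReal 4633 * (n : ℝ≥0∞)⁻¹ := by
      rw [vArea, tsum_eq_sum hηzero]
      have hpt : ∀ v ∈ U, (η v : ℝ≥0∞) ^ 2 =
          ((n : ℝ≥0∞)⁻¹) ^ 2 * ∑ k ∈ Finset.range n, (etaAnn c ρ (R k) v : ℝ≥0∞) ^ 2 := by
        intro v _
        have hdisjv : ∀ k ∈ Finset.range n, ∀ j ∈ Finset.range n, k ≠ j →
            etaAnn c ρ (R k) v = 0 ∨ etaAnn c ρ (R j) v = 0 := by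
          intro k hk j hj hkj
          by_contra hcon
          push_neg at hcon
          obtain ⟨h1, h2⟩ := hcon
          rcases lt_or_gt_of_ne hkj with h | h
          · exact hSdisj k j v h (hetaS k v h1) (hetaS j v h2)
          · exact hSdisj j k v h (hetaS j v h2) (hetaS k v h1)
        have hnn : η v ^ 2 =
            ((n : NNReal)⁻¹) ^ 2 * ∑ k ∈ Finset.range n, etaAnn c ρ (R k) v ^ 2 := by
          rw [hη]
          simp only
          rw [mul_pow, sq_sum_eq _ hdisjv]
        calc (η v : ℝ≥0∞) ^ 2 = ((η v ^ 2 : NNReal) : ℝ≥0∞) := by rw [ENNReal.coe_pow]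
          _ = _ := by
            rw [hnn, ENNReal.coe_mul, ENNReal.coe_pow, ENNReal.coe_inv hnn0,
              ENNReal.coe_natCast, ENNReal.coe_finset_sum]
            simp [ENNReal.coe_pow]
      calc ∑ v ∈ U, (η v : ℝ≥0∞) ^ 2
          = ∑ v ∈ U, ((n : ℝ≥0∞)⁻¹) ^ 2 *
              ∑ k ∈ Finset.range n, (etaAnn c ρ (R k) v : ℝ≥0∞) ^ 2 :=
            Finset.sum_congr rfl hpt
        _ = ((n : ℝ≥0∞)⁻¹) ^ 2 *
              ∑ k ∈ Finset.range n, ∑ v ∈ U, (etaAnn c ρ (R k) v : ℝ≥0∞) ^ 2 := by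
            rw [← Finset.mul_sum, Finset.sum_comm]
        _ ≤ ((n : ℝ≥0∞)⁻¹) ^ 2 * ∑ _k ∈ Finset.range n, ENNReal.ofReal 4633 :=
            mul_le_mul_right (Finset.sum_le_sum fun k _ => hannArea k) _
        _ = ((n : ℝ≥0∞)⁻¹) ^ 2 * ((n : ℝ≥0∞) * ENNReal.ofReal 4633) := by
            rw [Finset.sum_const, Finset.card_range, nsmul_eq_mul]
        _ = ENNReal.ofReal 4633 * (n : ℝ≥0∞)⁻¹ := by
            rw [sq, mul_assoc ((n : ℝ≥0∞)⁻¹), ← mul_assoc ((n : ℝ≥0∞)⁻¹) ((n : ℝ≥0∞)),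
              ENNReal.inv_mul_cancel hcast0 (ENNReal.natCast_ne_top n), one_mul, mul_comm]
    calc MOD (infPathsFrom G V₀) ≤ vArea η := iInf₂_le η hadm
      _ ≤ _ := harea
  have hMOD : MOD (infPathsFrom G V₀) = 0 := by
    by_contra h0
    have hne : MOD (infPathsFrom G V₀) / ENNReal.ofReal 4633 ≠ 0 := by
      simp only [ne_eq, ENNReal.div_eq_zero_iff, not_or]
      exact ⟨h0, ENNReal.ofReal_ne_top⟩
    obtain ⟨m, hm⟩ := ENNReal.exists_inv_nat_lt hne
    have hm0 : 0 < m := by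
      rcases Nat.eq_zero_or_pos m with rfl | h
      · rw [Nat.cast_zero, ENNReal.inv_zero] at hm
        exact absurd hm not_top_lt
      · exact h
    have h2 := hMODle m hm0
    have h3 : ENNReal.ofReal 4633 * (m : ℝ≥0∞)⁻¹ <
        ENNReal.ofReal 4633 * (MOD (infPathsFrom G V₀) / ENNReal.ofReal 4633) := by
      rw [ENNReal.mul_lt_mul_iff_right hconst0 ENNReal.ofReal_ne_top]
      exact hm
    have h4 : ENNReal.ofReal 4633 * (MOD (infPathsFrom G V₀) / ENNReal.ofReal 4633) ≤
        MOD (infPathsFrom G V₀) := ENNReal.mul_div_le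
    exact absurd (lt_of_le_of_lt h2 (lt_of_lt_of_le h3 h4)) (lt_irrefl _)
  rw [VEL, hMOD]
  simp
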